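/- Let n ≥ 3 be an integer, m = n − 1, and suppose 1/(m+1) < ρ < 1/m. Then there is no solution (x, y) of the system (S_ρ) on all of ℝ such that x′(t) < 0 and 0 < x(t) < 1 for every t ∈ ℝ and (x(t), y(t)) → (1, 0) as t → −∞. -/

import Mathlib

/-!
Write `D = 1 - 2mρ`, `A = (m-1)(1-mρ)`, `B = m(m-1)((m+1)ρ-1)` and `C = 1+m-4mρ`; in the range
`1/(m+1) < ρ < 1/m` we have `D < 0 < A, B`, and `B + CA = (m-1)D²`. Since `x' < 0`, the first
equation gives `xy < A(1-x²)`, and with the identity this makes `D y' > 0`, i.e. `y' < 0`, wherever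
`y ≥ 0`. As `y → 0` at `-∞`, `y` cannot stay positive, and once `y ≤ 0` it stays so. From then on
`D x' ≥ A(1-x²) ≥ A(1-x(t₀)²)`, so `x` decreases at least linearly and must become negative.
-/

open Filter Set Topology

/-- `IsEinsteinSystemSol m ρ x y` means the pair of differentiable functions `(x, y)` solves
the planar system `(S_ρ)`:
`(1 − 2mρ)·x′ = (m−1)(1−mρ)(1 − x²) − x·y` and
`(1 − 2mρ)·y′ = −m(m−1)(1−(m+1)ρ)(1 − x²) + (1 + m − 4mρ)·x·y`,
arising from rotationally symmetric gradient steady ρ-Einstein solitons. -/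
def IsEinsteinSystemSol (m ρ : ℝ) (x y : ℝ → ℝ) : Prop :=
  Differentiable ℝ x ∧ Differentiable ℝ y ∧
    (∀ t : ℝ, (1 - 2 * m * ρ) * deriv x t =
      (m - 1) * (1 - m * ρ) * (1 - x t ^ 2) - x t * y t) ∧
    (∀ t : ℝ, (1 - 2 * m * ρ) * deriv y t =
      -(m * (m - 1) * (1 - (m + 1) * ρ) * (1 - x t ^ 2)) + (1 + m - 4 * m * ρ) * x t * y t)

theorem exists_nonpos_of_tendsto_atBot_zero {f : ℝ → ℝ} (hf : Differentiable ℝ f)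
    (hlim : Tendsto f atBot (𝓝 0)) (hderiv : ∀ t, 0 < f t → deriv f t ≤ 0) :
    ∃ t, f t ≤ 0 := by
  by_contra! hpos
  have hanti : Antitone f := antitone_of_deriv_nonpos hf fun t => hderiv t (hpos t)
  exact (hpos 0).not_ge (hanti.ge_of_tendsto hlim 0)

theorem nonpos_of_deriv_neg_of_eq_zero {f : ℝ → ℝ} (hf : Differentiable ℝ f) {a : ℝ}
    (ha : f a ≤ 0) (hderiv : ∀ t, f t = 0 → deriv f t < 0) {t : ℝ} (ht : a ≤ t) : f t ≤ 0 :=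
  image_le_of_deriv_right_lt_deriv_boundary' (B := 0) (B' := 0) hf.continuous.continuousOn
    (fun s _ => (hf s).hasDerivAt.hasDerivWithinAt) ha continuousOn_const
    (fun _ _ => hasDerivWithinAt_const _ _ _) (fun s _ hs => hderiv s hs) ⟨ht, le_rfl⟩

theorem le_add_mul_of_deriv_le_of_le {f : ℝ → ℝ} (hf : Differentiable ℝ f) {a k : ℝ}
    (hderiv : ∀ t, a ≤ t → deriv f t ≤ k) {t : ℝ} (ht : a ≤ t) : f t ≤ f a + k * (t - a) := by
  have := (convex_Ici a).image_sub_le_mul_sub_of_deriv_le hf.continuous.continuousOn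
    (fun u _ => (hf u).differentiableWithinAt)
    (fun s hs => hderiv s (by rw [interior_Ici] at hs; exact hs.le))
    a self_mem_Ici t ht ht
  linarith

section Constants

variable {m ρ : ℝ} (hm : 1 < m) (hρ₁ : 1 < (m + 1) * ρ) (hρ₂ : m * ρ < 1)
include hm hρ₁ hρ₂

theorem one_sub_two_mul_mul_neg : 1 - 2 * m * ρ < 0 := by
  nlinarith

theorem einsteinSystem_snd_rhs_pos {x y : ℝ} (hx₀ : 0 < x) (hx₁ : x < 1) (hy : 0 ≤ y)
    (hxy : x * y < (m - 1) * (1 - m * ρ) * (1 - x ^ 2)) :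
    0 < -(m * (m - 1) * (1 - (m + 1) * ρ) * (1 - x ^ 2)) + (1 + m - 4 * m * ρ) * x * y := by
  have hu : 0 < 1 - x ^ 2 := by nlinarith
  have hB : 0 < m * (m - 1) * ((m + 1) * ρ - 1) := by
    have : 0 < m * (m - 1) := by nlinarith
    exact mul_pos this (by linarith)
  rcases le_or_gt 0 (1 + m - 4 * m * ρ) with hC | hC
  · nlinarith [mul_nonneg hC (mul_nonneg hx₀.le hy), mul_pos hB hu]
  · -- `B + C·A = (m-1)·D²`, and `C·xy > C·A·(1-x²)` because `C < 0`
    have hCxy := mul_lt_mul_of_neg_left hxy hC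
    have hD := one_sub_two_mul_mul_neg hm hρ₁ hρ₂
    have : 0 < (m - 1) * (1 - 2 * m * ρ) ^ 2 * (1 - x ^ 2) :=
      mul_pos (mul_pos (by linarith) (by nlinarith)) hu
    linear_combination this + hCxy

end Constants

namespace IsEinsteinSystemSol

variable {m ρ : ℝ} {x y : ℝ → ℝ}

theorem deriv_snd_neg (h : IsEinsteinSystemSol m ρ x y) (hm : 1 < m) (hρ₁ : 1 < (m + 1) * ρ)
    (hρ₂ : m * ρ < 1) {t : ℝ} (hx' : deriv x t < 0) (hx₀ : 0 < x t) (hx₁ : x t < 1)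
    (hy : 0 ≤ y t) : deriv y t < 0 := by
  have hD := one_sub_two_mul_mul_neg hm hρ₁ hρ₂
  have hxy : x t * y t < (m - 1) * (1 - m * ρ) * (1 - x t ^ 2) := by
    nlinarith [h.2.2.1 t]
  have := einsteinSystem_snd_rhs_pos hm hρ₁ hρ₂ hx₀ hx₁ hy hxy
  rw [← h.2.2.2 t] at this
  nlinarith

theorem deriv_fst_le (h : IsEinsteinSystemSol m ρ x y) (hD : 1 - 2 * m * ρ < 0)
    (hA : 0 ≤ (m - 1) * (1 - m * ρ)) {t x₀ : ℝ} (hx₀ : 0 < x t) (hx : x t ≤ x₀)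
    (hy : y t ≤ 0) :
    deriv x t ≤ (m - 1) * (1 - m * ρ) * (1 - x₀ ^ 2) / (1 - 2 * m * ρ) := by
  rw [le_div_iff_of_neg hD, mul_comm (deriv x t), h.2.2.1 t]
  nlinarith [mul_le_mul_of_nonneg_left (pow_le_pow_left₀ hx₀.le hx 2) hA,
    mul_nonpos_of_nonneg_of_nonpos hx₀.le hy]

end IsEinsteinSystemSol

/-- Case 6 of Theorem 4.2: for `1/(m+1) < ρ < 1/m` there is no global trajectory of the
system `(S_ρ)` with `x′ < 0`, `0 < x < 1` emanating from the equilibrium `(1,0)` at `t = -∞`. -/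
theorem no_steady_soliton_trajectory_case6 (n : ℕ) (hn : 3 ≤ n) (m ρ : ℝ)
    (hm : m = (n : ℝ) - 1) (hρ1 : 1 / (m + 1) < ρ) (hρ2 : ρ < 1 / m) :
    ¬ ∃ x y : ℝ → ℝ, IsEinsteinSystemSol m ρ x y ∧
      (∀ t : ℝ, deriv x t < 0) ∧ (∀ t : ℝ, 0 < x t ∧ x t < 1) ∧
      Filter.Tendsto (fun t => (x t, y t)) Filter.atBot (nhds (1, 0)) := by
  rintro ⟨x, y, hsol, hx', hx, hlim⟩
  have hm₁ : 1 < m := by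
    have : (3 : ℝ) ≤ n := by exact_mod_cast hn
    linarith
  have hρ₁ : 1 < (m + 1) * ρ := by rwa [div_lt_iff₀' (by linarith)] at hρ1
  have hρ₂ : m * ρ < 1 := by rwa [lt_div_iff₀' (by linarith)] at hρ2
  have hy' t (hy : 0 ≤ y t) : deriv y t < 0 :=
    hsol.deriv_snd_neg hm₁ hρ₁ hρ₂ (hx' t) (hx t).1 (hx t).2 hy
  obtain ⟨t₀, ht₀⟩ := exists_nonpos_of_tendsto_atBot_zero hsol.2.1
    ((continuous_snd.tendsto _).comp hlim) fun t ht => (hy' t ht.le).le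
  have hD := one_sub_two_mul_mul_neg hm₁ hρ₁ hρ₂
  have hA : 0 < (m - 1) * (1 - m * ρ) := mul_pos (by linarith) (by linarith)
  have hy_nonpos t (ht : t₀ ≤ t) : y t ≤ 0 :=
    nonpos_of_deriv_neg_of_eq_zero hsol.2.1 ht₀ (fun s hs => hy' s hs.ge) ht
  have hx_anti : Antitone x := antitone_of_deriv_nonpos hsol.1 fun t => (hx' t).le
  set k := (m - 1) * (1 - m * ρ) * (1 - x t₀ ^ 2) / (1 - 2 * m * ρ)
  have hk : k < 0 := div_neg_of_pos_of_neg (mul_pos hA (by nlinarith [hx t₀])) hD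
  have hxk t (ht : t₀ ≤ t) : deriv x t ≤ k :=
    hsol.deriv_fst_le hD hA.le (hx t).1 (hx_anti ht) (hy_nonpos t ht)
  set T := t₀ - x t₀ / k
  have hT : t₀ ≤ T := by
    have := div_neg_of_pos_of_neg (hx t₀).1 hk
    linarith
  have hxT := le_add_mul_of_deriv_le_of_le hsol.1 hxk hT
  have : k * (x t₀ / k) = x t₀ := mul_div_cancel₀ _ hk.ne
  linarith [(hx T).1]
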